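/- Let f be a twice continuously differentiable convex function on [-1,1]. Then for every integer n ≥ 2, the error of best uniform approximation of f by convex polynomials of degree at most n satisfies E_n^{(+2)}(f) ≤ E_{n-2}(f''), where E_{n-2}(f'') is the error of best uniform approximation on [-1,1] of the second derivative f'' by real polynomials of degree at most n−2. -/

import Mathlib

/-- Error of best uniform approximation of `f` on `[-1,1]` by real polynomials
of degree at most `n`. -/
noncomputable def bestApproxError (n : ℕ) (f : ℝ → ℝ) : ℝ :=
  sInf {r : ℝ | ∃ P : Polynomial ℝ, P.natDegree ≤ n ∧
    r = ⨆ x : Set.Icc (-1 : ℝ) 1, |P.eval (x : ℝ) - f x|}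

/-- Error of best uniform approximation of `f` on `[-1,1]` by convex polynomials
(i.e. polynomials with nonnegative second derivative on `[-1,1]`) of degree at most `n`. -/
noncomputable def bestConvexApproxError (n : ℕ) (f : ℝ → ℝ) : ℝ :=
  sInf {r : ℝ | ∃ P : Polynomial ℝ, P.natDegree ≤ n ∧
    (∀ x ∈ Set.Icc (-1 : ℝ) 1, 0 ≤ (P.derivative.derivative).eval x) ∧
    r = ⨆ x : Set.Icc (-1 : ℝ) 1, |P.eval (x : ℝ) - f x|}

/-! Given `q` with `|q - f''| ≤ E` on `[-1, 1]`, take `p` with `p'' = q + E` interpolating `f`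
at `±1`. Then `p'' ≥ f'' ≥ 0`, so `p` is convex, and `p - f` is convex and vanishes at `±1`,
so `p ≤ f`. Likewise `(p + E (1 - x²))'' = q - E ≤ f''` gives
`f ≤ p + E (1 - x²) ≤ p + E`. Hence `|p - f| ≤ E`. -/

open Set Polynomial

lemma Polynomial.contDiff_eval {𝕜 : Type*} [NontriviallyNormedField 𝕜] (p : 𝕜[X])
    (n : WithTop ℕ∞) : ContDiff 𝕜 n fun x => p.eval x := by
  simpa using p.contDiff_aeval (𝕜 := 𝕜) n

lemma Polynomial.iteratedDerivWithin_eval {𝕜 : Type*} [NontriviallyNormedField 𝕜] (p : 𝕜[X])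
    (n : ℕ) {s : Set 𝕜} (hs : UniqueDiffOn 𝕜 s) {x : 𝕜} (hx : x ∈ s) :
    iteratedDerivWithin n (fun x => p.eval x) s x = (derivative^[n] p).eval x := by
  induction n generalizing x with
  | zero => simp
  | succ n ih =>
    rw [iteratedDerivWithin_succ, derivWithin_congr (fun y hy => ih hy) (ih hx),
      Polynomial.derivWithin _ (hs x hx), Function.iterate_succ_apply']

lemma Polynomial.exists_derivative_eq {K : Type*} [Field K] [CharZero K] (q : K[X]) :
    ∃ p : K[X], p.natDegree ≤ q.natDegree + 1 ∧ derivative p = q := by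
  refine ⟨∑ i ∈ Finset.range (q.natDegree + 1), C (q.coeff i / (i + 1)) * X ^ (i + 1), ?_, ?_⟩
  · exact natDegree_sum_le_of_forall_le _ _ fun i hi =>
      (natDegree_C_mul_X_pow_le _ _).trans (by simpa using Finset.mem_range.1 hi)
  · conv_rhs => rw [q.as_sum_range_C_mul_X_pow]
    refine (derivative_sum).trans (Finset.sum_congr rfl fun i _ => ?_)
    rw [derivative_C_mul_X_pow]
    push_cast
    congr 2
    field_simp

lemma Polynomial.exists_derivative_derivative_eq_of_eval_eq {K : Type*} [Field K] [CharZero K]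
    (q : K[X]) {a b : K} (hab : a ≠ b) (u v : K) :
    ∃ p : K[X], p.natDegree ≤ q.natDegree + 2 ∧ derivative (derivative p) = q ∧
      p.eval a = u ∧ p.eval b = v := by
  obtain ⟨q₁, hq₁, rfl⟩ := q.exists_derivative_eq
  obtain ⟨p₀, hp₀, rfl⟩ := q₁.exists_derivative_eq
  set α := u - p₀.eval a
  set β := (v - p₀.eval b - α) / (b - a)
  refine ⟨p₀ + C α + C β * (X - C a), ?_, by simp, by simp [α], ?_⟩
  · refine natDegree_add_le_of_degree_le (by rw [natDegree_add_C]; omega) ?_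
    exact (natDegree_C_mul_le _ _).trans (by rw [natDegree_X_sub_C]; omega)
  · have : b - a ≠ 0 := sub_ne_zero.2 hab.symm
    simp only [eval_add, eval_C, eval_mul, eval_sub, eval_X, β]
    field_simp
    ring

lemma ConvexOn.iteratedDerivWithin_two_nonneg {D : Set ℝ} {f : ℝ → ℝ} (hf : ConvexOn ℝ D f)
    (hd : DifferentiableOn ℝ f D) (x : ℝ) : 0 ≤ iteratedDerivWithin 2 f D x := by
  rw [iteratedDerivWithin_succ, iteratedDerivWithin_one]
  exact (hf.monotoneOn_derivWithin hd).derivWithin_nonneg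

lemma convexOn_of_iteratedDerivWithin_two_nonneg {D : Set ℝ} {f : ℝ → ℝ} (hD : Convex ℝ D)
    (hD' : UniqueDiffOn ℝ D) (hf : ContDiffOn ℝ 2 f D)
    (hf₂ : ∀ x ∈ interior D, 0 ≤ iteratedDerivWithin 2 f D x) : ConvexOn ℝ D f := by
  have hf' : DifferentiableOn ℝ (derivWithin f D) D :=
    (hf.derivWithin hD' (m := 1) (by norm_num)).differentiableOn one_ne_zero
  refine convexOn_of_hasDerivWithinAt2_nonneg (f' := derivWithin f D) hD hf.continuousOn
    (fun x hx => ?_) (fun x hx => ?_) hf₂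
  · exact ((hf.differentiableOn two_ne_zero x (interior_subset hx)).hasDerivWithinAt).mono
      interior_subset
  · rw [iteratedDerivWithin_succ, iteratedDerivWithin_one]
    exact (hf' x (interior_subset hx)).hasDerivWithinAt.mono interior_subset

lemma le_on_Icc_of_iteratedDerivWithin_two_le {a b : ℝ} {f g : ℝ → ℝ} (hab : a < b)
    (hf : ContDiffOn ℝ 2 f (Icc a b)) (hg : ContDiffOn ℝ 2 g (Icc a b))
    (ha : f a ≤ g a) (hb : f b ≤ g b)
    (h₂ : ∀ x ∈ Ioo a b,
      iteratedDerivWithin 2 g (Icc a b) x ≤ iteratedDerivWithin 2 f (Icc a b) x) :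
    ∀ x ∈ Icc a b, f x ≤ g x := by
  have hconv : ConvexOn ℝ (Icc a b) (f - g) := by
    refine convexOn_of_iteratedDerivWithin_two_nonneg (convex_Icc a b) (uniqueDiffOn_Icc hab)
      (hf.sub hg) fun x hx => ?_
    rw [interior_Icc] at hx
    have hx' := Ioo_subset_Icc_self hx
    rw [iteratedDerivWithin_sub hx' (uniqueDiffOn_Icc hab) (hf.contDiffWithinAt hx')
      (hg.contDiffWithinAt hx')]
    exact sub_nonneg.2 (h₂ x hx)
  intro x hx
  rw [← segment_eq_Icc hab.le] at hx
  have := hconv.le_on_segment (left_mem_Icc.2 hab.le) (right_mem_Icc.2 hab.le) hx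
  simp only [Pi.sub_apply] at this
  linarith [max_le (sub_nonpos.2 ha) (sub_nonpos.2 hb)]

lemma abs_le_iSup_abs_of_continuousOn {s : Set ℝ} (hs : IsCompact s) {g : ℝ → ℝ}
    (hg : ContinuousOn g s) {x : ℝ} (hx : x ∈ s) : |g x| ≤ ⨆ y : s, |g y| := by
  have hbdd := hs.bddAbove_image hg.abs
  rw [image_eq_range] at hbdd
  exact le_ciSup hbdd ⟨x, hx⟩

theorem exists_polynomial_sandwich_of_abs_sub_iteratedDerivWithin_le {a b : ℝ} {f : ℝ → ℝ}
    (hab : a < b) (hf : ContDiffOn ℝ 2 f (Icc a b)) (q : ℝ[X]) {E : ℝ}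
    (hE : ∀ x ∈ Icc a b, |q.eval x - iteratedDerivWithin 2 f (Icc a b) x| ≤ E) :
    ∃ p : ℝ[X], p.natDegree ≤ q.natDegree + 2 ∧ derivative (derivative p) = q + C E ∧
      ∀ x ∈ Icc a b, p.eval x ≤ f x ∧ f x ≤ p.eval x + E * ((x - a) * (b - x)) := by
  obtain ⟨p, hdeg, hp₂, hpa, hpb⟩ :=
    (q + C E).exists_derivative_derivative_eq_of_eval_eq hab.ne (f a) (f b)
  rw [natDegree_add_C] at hdeg
  set r := p + C E * ((X - C a) * (C b - X))
  have hr₂ : derivative (derivative r) = q - C E := by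
    simp only [r, hp₂, derivative_add, derivative_sub, derivative_mul, derivative_C,
      derivative_X, derivative_one, derivative_zero]
    ring
  have h₂ (P : ℝ[X]) {y : ℝ} (hy : y ∈ Ioo a b) :
      iteratedDerivWithin 2 (fun x => P.eval x) (Icc a b) y = (derivative (derivative P)).eval y :=
    P.iteratedDerivWithin_eval 2 (uniqueDiffOn_Icc hab) (Ioo_subset_Icc_self hy)
  have hp_le : ∀ x ∈ Icc a b, p.eval x ≤ f x :=
    le_on_Icc_of_iteratedDerivWithin_two_le hab (p.contDiff_eval 2).contDiffOn hf hpa.le hpb.le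
      fun y hy => by
        rw [h₂ p hy, hp₂, eval_add, eval_C]
        linarith [(abs_le.1 (hE y (Ioo_subset_Icc_self hy))).1]
  have hf_le : ∀ x ∈ Icc a b, f x ≤ r.eval x :=
    le_on_Icc_of_iteratedDerivWithin_two_le hab hf (r.contDiff_eval 2).contDiffOn
      (by simp [r, hpa]) (by simp [r, hpb]) fun y hy => by
        rw [h₂ r hy, hr₂, eval_sub, eval_C]
        linarith [(abs_le.1 (hE y (Ioo_subset_Icc_self hy))).2]
  exact ⟨p, hdeg, hp₂, fun x hx => ⟨hp_le x hx, by simpa [r] using hf_le x hx⟩⟩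

/-- For a twice continuously differentiable convex function `f` on `[-1,1]` and `n ≥ 2`,
`E_n^{(+2)}(f) ≤ E_{n-2}(f'')`. -/
theorem convex_approx_le_approx_second_deriv (f : ℝ → ℝ)
    (hsmooth : ContDiffOn ℝ 2 f (Set.Icc (-1 : ℝ) 1))
    (hconv : ConvexOn ℝ (Set.Icc (-1 : ℝ) 1) f) :
    ∀ n : ℕ, 2 ≤ n →
      bestConvexApproxError n f ≤
        bestApproxError (n - 2) (iteratedDerivWithin 2 f (Set.Icc (-1 : ℝ) 1)) := by
  intro n hn
  set f₂ := iteratedDerivWithin 2 f (Icc (-1 : ℝ) 1)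
  have hf₂ : ContinuousOn f₂ (Icc (-1) 1) :=
    hsmooth.continuousOn_iteratedDerivWithin le_rfl (uniqueDiffOn_Icc (by norm_num))
  refine le_csInf ⟨_, 0, Nat.zero_le _, rfl⟩ ?_
  rintro _ ⟨q, hq, rfl⟩
  set E := ⨆ x : Icc (-1 : ℝ) 1, |q.eval (x : ℝ) - f₂ x|
  have hE x (hx : x ∈ Icc (-1 : ℝ) 1) : |q.eval x - f₂ x| ≤ E :=
    abs_le_iSup_abs_of_continuousOn isCompact_Icc (q.continuousOn.sub hf₂) hx
  obtain ⟨p, hpdeg, hp₂, hpf⟩ := exists_polynomial_sandwich_of_abs_sub_iteratedDerivWithin_le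
    (by norm_num) hsmooth q hE
  have hp_convex x (hx : x ∈ Icc (-1 : ℝ) 1) : 0 ≤ (derivative (derivative p)).eval x := by
    rw [hp₂, eval_add, eval_C]
    linarith [(abs_le.1 (hE x hx)).1, hconv.iteratedDerivWithin_two_nonneg
      (hsmooth.differentiableOn two_ne_zero) x]
  have hE₀ : 0 ≤ E := Real.iSup_nonneg fun _ => abs_nonneg _
  have hp_approx (x : Icc (-1 : ℝ) 1) : |p.eval (x : ℝ) - f x| ≤ E := by
    obtain ⟨x, hx⟩ := x
    obtain ⟨hpf₁, hpf₂⟩ := hpf x hx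
    rw [abs_sub_comm, abs_of_nonneg (sub_nonneg.2 hpf₁)]
    nlinarith [mul_nonneg hE₀ (sq_nonneg x)]
  refine le_trans (csInf_le ?_ ⟨p, by omega, hp_convex, rfl⟩) (Real.iSup_le hp_approx hE₀)
  refine ⟨0, ?_⟩
  rintro _ ⟨P, -, -, rfl⟩
  exact Real.iSup_nonneg fun _ => abs_nonneg _
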